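/- For every n ≥ 1, the number of permutations π in S_n such that π avoids both the pattern 231 and the pattern 1432 and π² avoids the pattern 231 equals L_{n+1} − ⌈n/2⌉ − 1, where L_m denotes the m-th Lucas number. -/
import Mathlib


/-- `π` contains the (classical) pattern `σ`: there is a strictly increasing
sequence of positions on which `π` is order isomorphic to `σ`. -/
def ContainsPat {n k : ℕ} (π : Equiv.Perm (Fin n)) (σ : Equiv.Perm (Fin k)) : Prop :=
  ∃ f : Fin k → Fin n, StrictMono f ∧ ∀ a b : Fin k, σ a < σ b ↔ π (f a) < π (f b)

/-- `π` avoids the pattern `σ`. -/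
def AvoidsPat {n k : ℕ} (π : Equiv.Perm (Fin n)) (σ : Equiv.Perm (Fin k)) : Prop :=
  ¬ ContainsPat π σ

/-- `π` contains the consecutive pattern `σ`: some `k` consecutive positions of `π`
carry values order isomorphic to `σ`. -/
def ContainsConsecPat {n k : ℕ} (π : Equiv.Perm (Fin n)) (σ : Equiv.Perm (Fin k)) : Prop :=
  ∃ (i : ℕ) (h : i + k ≤ n), ∀ a b : Fin k,
    σ a < σ b ↔ π ⟨i + a.val, by have := a.isLt; omega⟩ < π ⟨i + b.val, by have := b.isLt; omega⟩

/-- `π` avoids the consecutive pattern `σ`. -/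
def AvoidsConsecPat {n k : ℕ} (π : Equiv.Perm (Fin n)) (σ : Equiv.Perm (Fin k)) : Prop :=
  ¬ ContainsConsecPat π σ

/-- the pattern 231 (0-indexed: 0 ↦ 1, 1 ↦ 2, 2 ↦ 0) -/
def p231 : Equiv.Perm (Fin 3) := c[0, 1, 2]

/-- the pattern 312 (0-indexed: 0 ↦ 2, 1 ↦ 0, 2 ↦ 1) -/
def p312 : Equiv.Perm (Fin 3) := c[0, 2, 1]

/-- the pattern 213 (0-indexed: 0 ↦ 1, 1 ↦ 0, 2 ↦ 2) -/
def p213 : Equiv.Perm (Fin 3) := c[0, 1]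

/-- the pattern 1432 (0-indexed: 0 ↦ 0, 1 ↦ 3, 2 ↦ 2, 3 ↦ 1) -/
def p1432 : Equiv.Perm (Fin 4) := c[1, 3]

/-- direct sum of two permutations -/
def dsum {k m : ℕ} (σ : Equiv.Perm (Fin k)) (τ : Equiv.Perm (Fin m)) :
    Equiv.Perm (Fin (k + m)) :=
  finSumFinEquiv.symm.trans ((Equiv.sumCongr σ τ).trans finSumFinEquiv)

/-- the Lucas numbers: L₁ = 1, L₂ = 3, L_m = L_{m-1} + L_{m-2} -/
def lucas : ℕ → ℕ
  | 0 => 2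
  | 1 => 1
  | n + 2 => lucas (n + 1) + lucas n



section SoundCore
variable {n a b : ℕ} {g : ℕ → ℕ}

lemma sound_reg (h1 : ∀ i, i < a → g i = a+b-1-i)
    (h2 : ∀ i, a ≤ i → i < a+b → g i = i - a)
    (h3 : ∀ k, a+b ≤ k → k < n → (g k ≤ k+1 ∧ k ≤ g k + 1)) :
    ∀ x, x < n → (x < a ∧ g x = a+b-1-x) ∨ (a ≤ x ∧ x < a+b ∧ g x = x-a) ∨
      (a+b ≤ x ∧ g x ≤ x+1 ∧ x ≤ g x + 1) := by
  intro x hx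
  rcases lt_or_ge x a with h | h
  · exact Or.inl ⟨h, h1 x h⟩
  rcases lt_or_ge x (a+b) with h' | h'
  · exact Or.inr (Or.inl ⟨h, h', h2 x h h'⟩)
  · exact Or.inr (Or.inr ⟨h', h3 x h' hx⟩)

lemma sound_231 (h1 : ∀ i, i < a → g i = a+b-1-i)
    (h2 : ∀ i, a ≤ i → i < a+b → g i = i - a)
    (h3 : ∀ k, a+b ≤ k → k < n → (g k ≤ k+1 ∧ k ≤ g k + 1)) :
    ∀ i j k, i < j → j < k → k < n → ¬(g k < g i ∧ g i < g j) := by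
  intro i j k hij hjk hkn hc
  rcases sound_reg h1 h2 h3 i (by omega) with ⟨hi, ei⟩|⟨hi,hi',ei⟩|⟨hi,ei1,ei2⟩ <;>
    rcases sound_reg h1 h2 h3 j (by omega) with ⟨hj, ej⟩|⟨hj,hj',ej⟩|⟨hj,ej1,ej2⟩ <;>
    rcases sound_reg h1 h2 h3 k hkn with ⟨hk, ek⟩|⟨hk,hk',ek⟩|⟨hk,ek1,ek2⟩ <;>
    omega

lemma sound_1432 (h1 : ∀ i, i < a → g i = a+b-1-i)
    (h2 : ∀ i, a ≤ i → i < a+b → g i = i - a)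
    (h3 : ∀ k, a+b ≤ k → k < n → (g k ≤ k+1 ∧ k ≤ g k + 1)) :
    ∀ i j k l, i < j → j < k → k < l → l < n →
      ¬(g i < g l ∧ g l < g k ∧ g k < g j) := by
  intro i j k l hij hjk hkl hln hc
  rcases sound_reg h1 h2 h3 i (by omega) with ⟨hi, ei⟩|⟨hi,hi',ei⟩|⟨hi,ei1,ei2⟩ <;>
    rcases sound_reg h1 h2 h3 j (by omega) with ⟨hj, ej⟩|⟨hj,hj',ej⟩|⟨hj,ej1,ej2⟩ <;>
    rcases sound_reg h1 h2 h3 k (by omega) with ⟨hk, ek⟩|⟨hk,hk',ek⟩|⟨hk,ek1,ek2⟩ <;>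
    rcases sound_reg h1 h2 h3 l hln with ⟨hl, el⟩|⟨hl,hl',el⟩|⟨hl,el1,el2⟩ <;>
    omega

lemma sound_sqreg (hba : b ≤ a) (hab : a + b ≤ n)
    (h1 : ∀ i, i < a → g i = a+b-1-i)
    (h2 : ∀ i, a ≤ i → i < a+b → g i = i - a)
    (h3 : ∀ k, a+b ≤ k → k < n → (g k ≤ k+1 ∧ k ≤ g k + 1 ∧ g (g k) = k)) :
    ∀ x, x < n → (x < b ∧ g (g x) = b-1-x) ∨ (b ≤ x ∧ x < a ∧ g (g x) = x) ∨
      (a ≤ x ∧ x < a+b ∧ g (g x) = 2*a+b-1-x) ∨ (a+b ≤ x ∧ g (g x) = x) := by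
  intro x hx
  rcases lt_or_ge x b with h | h
  · left
    refine ⟨h, ?_⟩
    have e1 : g x = a+b-1-x := h1 x (by omega)
    have e2 : g (a+b-1-x) = (a+b-1-x) - a := h2 _ (by omega) (by omega)
    rw [e1, e2]; omega
  rcases lt_or_ge x a with h' | h'
  · right; left
    refine ⟨h, h', ?_⟩
    have e1 : g x = a+b-1-x := h1 x h'
    have e2 : g (a+b-1-x) = a+b-1-(a+b-1-x) := h1 _ (by omega)
    rw [e1, e2]; omega
  rcases lt_or_ge x (a+b) with h'' | h''
  · right; right; left
    refine ⟨h', h'', ?_⟩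
    have e1 : g x = x - a := h2 x h' h''
    have e2 : g (x-a) = a+b-1-(x-a) := h1 _ (by omega)
    rw [e1, e2]; omega
  · exact Or.inr (Or.inr (Or.inr ⟨h'', (h3 x h'' hx).2.2⟩))

lemma sound_sq231 (hba : b ≤ a) (hab : a + b ≤ n)
    (h1 : ∀ i, i < a → g i = a+b-1-i)
    (h2 : ∀ i, a ≤ i → i < a+b → g i = i - a)
    (h3 : ∀ k, a+b ≤ k → k < n → (g k ≤ k+1 ∧ k ≤ g k + 1 ∧ g (g k) = k)) :
    ∀ i j k, i < j → j < k → k < n → ¬(g (g k) < g (g i) ∧ g (g i) < g (g j)) := by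
  intro i j k hij hjk hkn hc
  rcases sound_sqreg hba hab h1 h2 h3 i (by omega) with ⟨hi, ei⟩|⟨hi,hi',ei⟩|⟨hi,hi',ei⟩|⟨hi,ei⟩ <;>
    rcases sound_sqreg hba hab h1 h2 h3 j (by omega) with ⟨hj, ej⟩|⟨hj,hj',ej⟩|⟨hj,hj',ej⟩|⟨hj,ej⟩ <;>
    rcases sound_sqreg hba hab h1 h2 h3 k hkn with ⟨hk, ek⟩|⟨hk,hk',ek⟩|⟨hk,hk',ek⟩|⟨hk,ek⟩ <;>
    omega

end SoundCore


section TailCore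
variable {n d0 : ℕ} {g gi : ℕ → ℕ}

lemma tail_core (hg : ∀ x, x < n → g x < n) (hgi : ∀ x, x < n → gi x < n)
    (hgig : ∀ x, x < n → gi (g x) = x) (hggi : ∀ x, x < n → g (gi x) = x)
    (H1 : ∀ i j k, i < j → j < k → k < n → ¬(g k < g i ∧ g i < g j))
    (ND3 : ∀ j k l, d0 < j → j < k → k < l → l < n → ¬(g l < g k ∧ g k < g j))
    (H3 : ∀ i j k, i < j → j < k → k < n →
      ¬(g (g k) < g (g i) ∧ g (g i) < g (g j))) :
    ∀ m d, n - d ≤ m → d0 ≤ d → (∀ k, k < n → (d < k ↔ d < g k)) →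
      ∀ k, d < k → k < n → (g k ≤ k + 1 ∧ k ≤ g k + 1 ∧ g (g k) = k) := by
  have hinj : ∀ x y, x < n → y < n → g x = g y → x = y := by
    intro x y hx hy h
    rw [← hgig x hx, ← hgig y hy, h]
  intro m
  induction m with
  | zero => intro d hmd hd0 hcl k hk hkn; omega
  | succ m ih =>
    intro d hmd hd0 hcl k hk hkn
    have hd1n : d + 1 < n := by omega
    have hgz' : g (gi (d+1)) = d + 1 := hggi (d+1) hd1n
    have hz'n : gi (d+1) < n := hgi (d+1) hd1n
    have hz'd : d < gi (d+1) := by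
      have := (hcl (gi (d+1)) hz'n).2
      omega
    have hz'le : gi (d+1) ≤ d + 2 := by
      by_contra hcon
      push_neg at hcon
      have h1 : d < g (d+1) := (hcl (d+1) hd1n).1 (by omega)
      have h2 : d < g (d+2) := (hcl (d+2) (by omega)).1 (by omega)
      have h1' : g (d+1) ≠ d+1 := by
        intro h
        have := hinj (d+1) (gi (d+1)) hd1n hz'n (by omega)
        omega
      have h2' : g (d+2) ≠ d+1 := by
        intro h
        have := hinj (d+2) (gi (d+1)) (by omega) hz'n (by omega)
        omega
      have hdesc : ¬ (g (d+1) < g (d+2)) := by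
        intro hrise
        exact H1 (d+1) (d+2) (gi (d+1)) (by omega) (by omega) hz'n ⟨by omega, hrise⟩
      have hne : g (d+1) ≠ g (d+2) := by
        intro h
        have := hinj (d+1) (d+2) hd1n (by omega) h
        omega
      exact ND3 (d+1) (d+2) (gi (d+1)) (by omega) (by omega) (by omega) hz'n
        ⟨by omega, by omega⟩
    rcases Nat.lt_or_ge (gi (d+1)) (d+2) with hz1 | hz2
    · -- gi (d+1) = d+1 : fixed point
      have hfix : g (d+1) = d+1 := by
        have he : gi (d+1) = d + 1 := by omega
        rw [he] at hgz'
        exact hgz'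
      have hcl' : ∀ k', k' < n → (d+1 < k' ↔ d+1 < g k') := by
        intro k' hk'n
        constructor
        · intro h
          have hh := (hcl k' hk'n).1 (by omega)
          have : g k' ≠ d+1 := by
            intro he
            have := hinj k' (d+1) hk'n hd1n (by rw [he, hfix])
            omega
          omega
        · intro h
          have : k' ≠ d+1 := by
            intro he; rw [he, hfix] at h; omega
          have hh := (hcl k' hk'n).2 (by omega)
          omega
      rcases Nat.eq_or_lt_of_le hk with he | hlt
      · have he' : k = d + 1 := by omega
        rw [he', hfix]
        exact ⟨by omega, by omega, by rw [hfix]⟩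
      · exact ih (d+1) (by omega) (by omega) hcl' k (by omega) hkn
    · -- gi (d+1) = d+2 : g (d+2) = d+1
      have hz'eq : gi (d+1) = d + 2 := by omega
      have hd2n : d + 2 < n := by rw [← hz'eq]; exact hz'n
      have hgd2 : g (d+2) = d + 1 := by rw [← hz'eq, hgz']
      have hvn : g (d+1) < n := hg (d+1) hd1n
      have hvd : d < g (d+1) := (hcl (d+1) hd1n).1 (by omega)
      have hvne : g (d+1) ≠ d + 1 := by
        intro h
        have := hinj (d+1) (gi (d+1)) hd1n hz'n (by omega)
        omega
      have hveq : g (d+1) = d + 2 := by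
        by_contra hcon
        have hv3 : d + 3 ≤ g (d+1) := by omega
        have hgvd : d < g (g (d+1)) := (hcl (g (d+1)) hvn).1 (by omega)
        have hgvne1 : g (g (d+1)) ≠ d + 1 := by
          intro h
          have : g (d+1) = gi (d+1) := hinj (g (d+1)) (gi (d+1)) hvn hz'n (by omega)
          omega
        have hgv_gt : g (d+1) < g (g (d+1)) := by
          by_contra hle
          push_neg at hle
          have hgvnev : g (g (d+1)) ≠ g (d+1) := by
            intro h
            have := hinj (d+1) (g (d+1)) hd1n hvn (by omega)
            omega
          have hgq : g (gi (d+2)) = d + 2 := hggi (d+2) hd2n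
          have hqn : gi (d+2) < n := hgi (d+2) hd2n
          have hqd : d < gi (d+2) := (hcl (gi (d+2)) hqn).2 (by omega)
          have hqne1 : gi (d+2) ≠ d + 1 := by intro h; rw [h] at hgq; omega
          have hqne2 : gi (d+2) ≠ d + 2 := by intro h; rw [h] at hgq; omega
          refine H3 (d+1) (d+2) (gi (d+2)) (by omega) (by omega) hqn ⟨?_, ?_⟩
          · rw [hgq, hgd2]; omega
          · rw [hgd2]; omega
        -- (β) pigeonhole on values strictly between d+1 and g (d+1)
        have hmaps : ∀ w ∈ Finset.Icc (d+2) (g (d+1) - 1),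
            gi w ∈ Finset.Icc (d+3) (g (d+1) - 1) := by
          intro w hw
          simp only [Finset.mem_Icc] at hw ⊢
          have hwn : w < n := by omega
          have hgiw : g (gi w) = w := hggi w hwn
          have hgiwn : gi w < n := hgi w hwn
          have hwd : d < gi w := (hcl (gi w) hgiwn).2 (by omega)
          have hne1 : gi w ≠ d + 1 := by
            intro h; rw [h] at hgiw; omega
          have hne2 : gi w ≠ d + 2 := by
            intro h; rw [h, hgd2] at hgiw; omega
          have hnev : gi w ≠ g (d+1) := by
            intro h; rw [h] at hgiw; omega
          have hltv : gi w < g (d+1) := by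
            rcases Nat.lt_or_ge (gi w) (g (d+1)) with h | h
            · exact h
            · exfalso
              refine H1 (d+1) (g (d+1)) (gi w) (by omega) (by omega) hgiwn ⟨?_, ?_⟩
              · rw [hgiw]; omega
              · omega
          omega
        have hcard : (Finset.Icc (d+3) (g (d+1) - 1)).card <
            (Finset.Icc (d+2) (g (d+1) - 1)).card := by
          rw [Nat.card_Icc, Nat.card_Icc]; omega
        obtain ⟨x, hx, y, hy, hxy, hxyeq⟩ :=
          Finset.exists_ne_map_eq_of_card_lt_of_maps_to hcard hmaps
        simp only [Finset.mem_Icc] at hx hy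
        apply hxy
        rw [← hggi x (by omega), ← hggi y (by omega), hxyeq]
      -- swap case
      have hcl' : ∀ k', k' < n → (d+2 < k' ↔ d+2 < g k') := by
        intro k' hk'n
        constructor
        · intro h
          have hh := (hcl k' hk'n).1 (by omega)
          have h1 : g k' ≠ d+1 := by
            intro he
            have := hinj k' (d+2) hk'n hd2n (by rw [he, hgd2])
            omega
          have h2 : g k' ≠ d+2 := by
            intro he
            have := hinj k' (d+1) hk'n hd1n (by rw [he, hveq])
            omega
          omega
        · intro h
          have h1 : k' ≠ d+1 := by
            intro he; rw [he, hveq] at h; omega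
          have h2 : k' ≠ d+2 := by
            intro he; rw [he, hgd2] at h; omega
          have hh := (hcl k' hk'n).2 (by omega)
          omega
      rcases Nat.lt_or_ge k (d+3) with hk3 | hk3
      · rcases Nat.eq_or_lt_of_le hk with he | hlt
        · have he' : k = d + 1 := by omega
          rw [he', hveq]
          exact ⟨by omega, by omega, by rw [hgd2]⟩
        · have he' : k = d + 2 := by omega
          rw [he', hgd2]
          exact ⟨by omega, by omega, by rw [hveq]⟩
      · exact ih (d+2) (by omega) (by omega) hcl' k (by omega) hkn

end TailCore
section CompleteCore
variable {n : ℕ} {g gi : ℕ → ℕ}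

theorem complete_core (hn : 1 ≤ n)
    (hg : ∀ x, x < n → g x < n) (hgi : ∀ x, x < n → gi x < n)
    (hgig : ∀ x, x < n → gi (g x) = x) (hggi : ∀ x, x < n → g (gi x) = x)
    (H1 : ∀ i j k, i < j → j < k → k < n → ¬(g k < g i ∧ g i < g j))
    (H2 : ∀ i j k l, i < j → j < k → k < l → l < n →
      ¬(g i < g l ∧ g l < g k ∧ g k < g j))
    (H3 : ∀ i j k, i < j → j < k → k < n →
      ¬(g (g k) < g (g i) ∧ g (g i) < g (g j))) :
    ∃ a b, b ≤ a ∧ a + b ≤ n ∧ (∀ i, i < a → g i = a + b - 1 - i) ∧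
      (∀ i, a ≤ i → i < a + b → g i = i - a) ∧
      (∀ k, a + b ≤ k → k < n → (g k ≤ k + 1 ∧ k ≤ g k + 1 ∧ g (g k) = k)) := by
  have hinj : ∀ x y, x < n → y < n → g x = g y → x = y := by
    intro x y hx hy h
    rw [← hgig x hx, ← hgig y hy, h]
  have hcn : g 0 < n := hg 0 hn
  rcases Nat.eq_zero_or_pos (g 0) with hc0 | hcpos
  · -- g 0 = 0 : pure tail with a = 1, b = 0
    refine ⟨1, 0, by omega, by omega, ?_, ?_, ?_⟩
    · intro i hi
      have : i = 0 := by omega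
      rw [this, hc0]
    · intro i h1 h2; omega
    · intro k hk hkn
      have hcl : ∀ k', k' < n → (0 < k' ↔ 0 < g k') := by
        intro k' hk'n
        constructor
        · intro h
          rcases Nat.eq_zero_or_pos (g k') with h' | h'
          · exact absurd (hinj k' 0 hk'n hn (by omega)) (by omega)
          · exact h'
        · intro h
          rcases Nat.eq_zero_or_pos k' with h' | h'
          · rw [h'] at h; omega
          · exact h'
      have ND3 : ∀ j k l, 0 < j → j < k → k < l → l < n → ¬(g l < g k ∧ g k < g j) := by
        intro j k' l h0j hjk hkl hln ⟨ha, hb⟩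
        have hgl : 0 < g l := (hcl l hln).1 (by omega)
        exact H2 0 j k' l h0j hjk hkl hln ⟨by omega, ha, hb⟩
      exact tail_core hg hgi hgig hggi H1 ND3 H3 n 0 (by omega) (le_refl 0) hcl k (by omega) hkn
  · -- c := g 0 ≥ 1
    have hzn : gi 0 < n := hgi 0 hn
    have hgz : g (gi 0) = 0 := hggi 0 hn
    have hzpos : 0 < gi 0 := by
      rcases Nat.eq_zero_or_pos (gi 0) with h | h
      · rw [h] at hgz; omega
      · exact h
    -- A : strict descent on [0, z]
    have descA : ∀ i j, i < j → j ≤ gi 0 → g j < g i := by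
      intro i j hij hjz
      have hjn : j < n := by omega
      have hin : i < n := by omega
      have hine : i ≠ gi 0 := by omega
      have hgipos : 0 < g i := by
        rcases Nat.eq_zero_or_pos (g i) with h | h
        · exact absurd (hinj i (gi 0) hin hzn (by omega)) hine
        · exact h
      rcases Nat.eq_or_lt_of_le hjz with he | hlt
      · rw [he, hgz]; omega
      · have hnlt : ¬ (g i < g j) := by
          intro hr
          exact H1 i j (gi 0) hij hlt hzn ⟨by omega, hr⟩
        have hne : g j ≠ g i := by
          intro h; exact absurd (hinj j i hjn hin h) (by omega)
        omega
    -- chain down : t ≤ g (z - t)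
    have chainD : ∀ t, t ≤ gi 0 → t ≤ g (gi 0 - t) := by
      intro t
      induction t with
      | zero => intro _; omega
      | succ t iht =>
        intro ht
        have h1 := iht (by omega)
        have h2 := descA (gi 0 - (t+1)) (gi 0 - t) (by omega) (by omega)
        omega
    have hzc : gi 0 ≤ g 0 := by
      have := chainD (gi 0) (le_refl _)
      simpa using this
    -- B1 : positions after c have values after c
    have B1 : ∀ p, g 0 < p → p < n → g 0 < g p := by
      intro p hcp hpn
      by_contra hcon
      push_neg at hcon
      have hne : g p ≠ g 0 := by
        intro h; exact absurd (hinj p 0 hpn hn h) (by omega)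
      have nobig : ∀ j, 0 < j → j < p → g j ≤ g 0 := by
        intro j h0j hjp
        by_contra hb
        push_neg at hb
        exact H1 0 j p h0j hjp hpn ⟨by omega, hb⟩
      have hmaps : ∀ x ∈ Finset.range (p+1), g x ∈ Finset.range (g 0 + 1) := by
        intro x hx
        simp only [Finset.mem_range] at hx ⊢
        rcases Nat.eq_zero_or_pos x with h | h
        · rw [h]; omega
        · rcases Nat.lt_or_ge x p with h' | h'
          · have := nobig x h h'; omega
          · have : x = p := by omega
            rw [this]; omega
      have hcard : (Finset.range (g 0 + 1)).card < (Finset.range (p+1)).card := by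
        simp only [Finset.card_range]; omega
      obtain ⟨x, hx, y, hy, hxy, hxyeq⟩ :=
        Finset.exists_ne_map_eq_of_card_lt_of_maps_to hcard hmaps
      simp only [Finset.mem_range] at hx hy
      exact hxy (hinj x y (by omega) (by omega) hxyeq)
    have B2 : ∀ p, p ≤ g 0 → g p ≤ g 0 := by
      intro p hpc
      have hpn : p < n := by omega
      by_contra hcon
      push_neg at hcon
      have hmaps : ∀ x ∈ insert p (Finset.Ioo (g 0) n), g x ∈ Finset.Ioo (g 0) n := by
        intro x hx
        rcases Finset.mem_insert.1 hx with h | h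
        · rw [h]
          simp only [Finset.mem_Ioo]
          exact ⟨hcon, hg p hpn⟩
        · simp only [Finset.mem_Ioo] at h ⊢
          exact ⟨B1 x h.1 h.2, hg x h.2⟩
      have hcard : (Finset.Ioo (g 0) n).card < (insert p (Finset.Ioo (g 0) n)).card := by
        rw [Finset.card_insert_of_notMem (by simp only [Finset.mem_Ioo]; omega)]
        omega
      obtain ⟨x, hx, y, hy, hxy, hxyeq⟩ :=
        Finset.exists_ne_map_eq_of_card_lt_of_maps_to hcard hmaps
      have hxn : x < n := by
        rcases Finset.mem_insert.1 hx with h | h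
        · omega
        · simp only [Finset.mem_Ioo] at h; omega
      have hyn : y < n := by
        rcases Finset.mem_insert.1 hy with h | h
        · omega
        · simp only [Finset.mem_Ioo] at h; omega
      exact hxy (hinj x y hxn hyn hxyeq)
    -- sigma separation
    have sep : ∀ i k, i < gi 0 → gi 0 < k → k ≤ g 0 → g (g i) < g (g k) := by
      intro i k hiz hzk hkc
      have hkn : k < n := by omega
      have hin : i < n := by omega
      have hgi_le : g i ≤ g 0 := by
        rcases Nat.eq_zero_or_pos i with h | h
        · rw [h]
        · exact le_of_lt (descA 0 i h (by omega))
      have hsi_le : g (g i) ≤ g 0 := B2 (g i) hgi_le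
      have hsi_ne : g (g i) ≠ g 0 := by
        intro h
        have h1 : g i = 0 := hinj (g i) 0 (hg i hin) hn h
        have h2 : i = gi 0 := by rw [← hgig i hin, h1]
        omega
      have h3 := H3 i (gi 0) k hiz hzk hkn
      rw [hgz] at h3
      have hge : ¬ (g (g k) < g (g i)) := fun hlt => h3 ⟨hlt, by omega⟩
      have hne : g (g k) ≠ g (g i) := by
        intro h
        have h1 : g k = g i := hinj (g k) (g i) (hg k hkn) (hg i hin) h
        have h2 : k = i := hinj k i hkn hin h1
        omega
      omega
    -- sigma low / high
    have siglow : ∀ i, i < gi 0 → g (g i) < gi 0 := by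
      intro i hiz
      by_contra hcon
      push_neg at hcon
      have hin : i < n := by omega
      have hsi_ne : g (g i) ≠ g 0 := by
        intro h
        have h1 : g i = 0 := hinj (g i) 0 (hg i hin) hn h
        have h2 : i = gi 0 := by rw [← hgig i hin, h1]
        omega
      have hsi_le : g (g i) ≤ g 0 := by
        apply B2
        rcases Nat.eq_zero_or_pos i with h | h
        · rw [h]
        · exact le_of_lt (descA 0 i h (by omega))
      have hmaps : ∀ x ∈ Finset.Icc (gi 0) (g 0),
          g (g x) ∈ Finset.Ioc (g (g i)) (g 0) := by
        intro x hx
        simp only [Finset.mem_Icc] at hx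
        simp only [Finset.mem_Ioc]
        rcases Nat.eq_or_lt_of_le hx.1 with he | hlt
        · rw [← he, hgz]
          omega
        · exact ⟨sep i x hiz hlt hx.2, B2 (g x) (B2 x hx.2)⟩
      have hcard : (Finset.Ioc (g (g i)) (g 0)).card < (Finset.Icc (gi 0) (g 0)).card := by
        rw [Nat.card_Ioc, Nat.card_Icc]
        omega
      obtain ⟨x, hx, y, hy, hxy, hxyeq⟩ :=
        Finset.exists_ne_map_eq_of_card_lt_of_maps_to hcard hmaps
      simp only [Finset.mem_Icc] at hx hy
      have hxn : x < n := by omega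
      have hyn : y < n := by omega
      have h1 : g x = g y := hinj (g x) (g y) (hg x hxn) (hg y hyn) hxyeq
      exact hxy (hinj x y hxn hyn h1)
    have sighigh : ∀ k, gi 0 < k → k ≤ g 0 → gi 0 ≤ g (g k) := by
      intro k hzk hkc
      by_contra hcon
      push_neg at hcon
      have hmaps : ∀ x ∈ Finset.range (gi 0), g (g x) ∈ Finset.range (g (g k)) := by
        intro x hx
        simp only [Finset.mem_range] at hx ⊢
        exact sep x k hx hzk hkc
      have hcard : (Finset.range (g (g k))).card < (Finset.range (gi 0)).card := by
        simp only [Finset.card_range]; omega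
      obtain ⟨x, hx, y, hy, hxy, hxyeq⟩ :=
        Finset.exists_ne_map_eq_of_card_lt_of_maps_to hcard hmaps
      simp only [Finset.mem_range] at hx hy
      have hxn : x < n := by omega
      have hyn : y < n := by omega
      have h1 : g x = g y := hinj (g x) (g y) (hg x hxn) (hg y hyn) hxyeq
      exact hxy (hinj x y hxn hyn h1)
    -- C : for values w in [1, c] : z ≤ g w ↔ z < gi w
    have Cfact : ∀ w, 1 ≤ w → w ≤ g 0 → (gi 0 ≤ g w ↔ gi 0 < gi w) := by
      intro w h1w hwc
      have hwn : w < n := by omega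
      have hpwn : gi w < n := hgi w hwn
      have hgpw : g (gi w) = w := hggi w hwn
      have hpwc : gi w ≤ g 0 := by
        by_contra hcon
        push_neg at hcon
        have := B1 (gi w) hcon hpwn
        omega
      have hpwnez : gi w ≠ gi 0 := by
        intro h
        rw [h, hgz] at hgpw
        omega
      constructor
      · intro h
        rcases Nat.lt_or_ge (gi 0) (gi w) with h' | h'
        · exact h'
        · exfalso
          have hlt : gi w < gi 0 := by omega
          have := siglow (gi w) hlt
          rw [hgpw] at this
          omega
      · intro h
        have := sighigh (gi w) h hpwc
        rw [hgpw] at this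
        exact this
    -- position of value z is < z
    have hpz : gi (gi 0) < gi 0 := by
      have h := Cfact (gi 0) hzpos hzc
      have hlhs : ¬ (gi 0 ≤ g (gi 0)) := by rw [hgz]; omega
      have h2 : ¬ (gi 0 < gi (gi 0)) := fun hc => hlhs (h.2 hc)
      have hne : gi (gi 0) ≠ gi 0 := by
        intro he
        have : g (gi (gi 0)) = gi 0 := hggi (gi 0) hzn
        rw [he, hgz] at this
        omega
      omega
    -- E : values at positions (z, c] are < z
    have Emono : ∀ q1 q2, gi 0 < q1 → q1 < q2 → q2 ≤ g 0 → gi 0 ≤ g q1 → gi 0 ≤ g q2 := by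
      intro q1 q2 hq1 hq12 hq2c hgq1
      by_contra hcon
      push_neg at hcon
      have hq2n : q2 < n := by omega
      have hq1n : q1 < n := by omega
      have hgpz : g (gi (gi 0)) = gi 0 := hggi (gi 0) hzn
      have hgq1' : gi 0 < g q1 := by
        rcases Nat.eq_or_lt_of_le hgq1 with he | hlt
        · exfalso
          have : q1 = gi (gi 0) := by rw [← hgig q1 hq1n, ← he]
          omega
        · exact hlt
      exact H1 (gi (gi 0)) q1 q2 (by omega) hq12 hq2n ⟨by omega, by omega⟩
    have Efact : ∀ q, gi 0 < q → q ≤ g 0 → g q < gi 0 := by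
      intro q hzq hqc
      by_contra hcon
      push_neg at hcon
      have hgc : gi 0 ≤ g (g 0) := by
        rcases Nat.eq_or_lt_of_le hqc with he | hlt
        · rw [← he]; exact hcon
        · exact Emono q (g 0) hzq hlt (le_refl _) hcon
      have h := (Cfact (g 0) hcpos (le_refl _)).1 hgc
      have : gi (g 0) = 0 := hgig 0 hn
      omega
    -- image of (z, c] under g
    have hinjOn : Set.InjOn g ↑(Finset.Ioc (gi 0) (g 0)) := by
      intro x hx y hy hxy
      simp only [Finset.coe_Ioc, Set.mem_Ioc] at hx hy
      exact hinj x y (by omega) (by omega) hxy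
    have hScard : ((Finset.Ioc (gi 0) (g 0)).image g).card = g 0 - gi 0 := by
      rw [Finset.card_image_of_injOn hinjOn, Nat.card_Ioc]
    have hSsub : (Finset.Ioc (gi 0) (g 0)).image g ⊆ Finset.Icc 1 (gi 0 - 1) := by
      intro v hv
      simp only [Finset.mem_image, Finset.mem_Ioc] at hv
      obtain ⟨q, ⟨hq1, hq2⟩, hqv⟩ := hv
      simp only [Finset.mem_Icc]
      have h1 : g q < gi 0 := Efact q hq1 hq2
      have h2 : g q ≠ 0 := by
        intro h
        have : q = gi 0 := by rw [← hgig q (by omega), h]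
        omega
      omega
    have hb'z : g 0 - gi 0 < gi 0 := by
      have := Finset.card_le_card hSsub
      rw [hScard, Nat.card_Icc] at this
      omega
    have SleB : ∀ q, gi 0 < q → q ≤ g 0 → g q ≤ g 0 - gi 0 := by
      intro q hq1 hq2
      by_contra hcon
      push_neg at hcon
      have hvS : g q ∈ (Finset.Ioc (gi 0) (g 0)).image g := by
        simp only [Finset.mem_image, Finset.mem_Ioc]
        exact ⟨q, ⟨hq1, hq2⟩, rfl⟩
      have hex : ∃ u ∈ Finset.Icc 1 (g 0 - gi 0), u ∉ (Finset.Ioc (gi 0) (g 0)).image g := by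
        by_contra hc2
        push_neg at hc2
        have hsub : Finset.Icc 1 (g 0 - gi 0) ⊆ (Finset.Ioc (gi 0) (g 0)).image g := hc2
        have heq : Finset.Icc 1 (g 0 - gi 0) = (Finset.Ioc (gi 0) (g 0)).image g := by
          apply Finset.eq_of_subset_of_card_le hsub
          rw [hScard, Nat.card_Icc]
          omega
        rw [← heq] at hvS
        simp only [Finset.mem_Icc] at hvS
        omega
      obtain ⟨u, hu, hunS⟩ := hex
      simp only [Finset.mem_Icc] at hu
      have hun : u < n := by omega
      have hgiu : g (gi u) = u := hggi u hun
      have hgiun : gi u < n := hgi u hun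
      have hgiu_le : gi u ≤ g 0 := by
        by_contra hc3
        push_neg at hc3
        have := B1 (gi u) hc3 hgiun
        omega
      have hgiu_lez : gi u < gi 0 := by
        have h1 : ¬ (gi 0 < gi u) := by
          intro hc4
          apply hunS
          simp only [Finset.mem_image, Finset.mem_Ioc]
          exact ⟨gi u, ⟨hc4, hgiu_le⟩, hgiu⟩
        have h2 : gi u ≠ gi 0 := by
          intro he
          rw [he, hgz] at hgiu
          omega
        omega
      -- g u < z via Cfact
      have hgu_lt : g u < gi 0 := by
        have h := Cfact u hu.1 (by omega)
        have : ¬ (gi 0 < gi u) := by omega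
        have h2 : ¬ (gi 0 ≤ g u) := fun hc5 => this (h.1 hc5)
        omega
      -- z ≤ g v via Cfact where v = g q
      have hgv_ge : gi 0 ≤ g (g q) := by
        have hvc : g q ≤ g 0 := B2 q hq2
        have hv1 : 1 ≤ g q := by omega
        have h := Cfact (g q) hv1 hvc
        apply h.2
        have : gi (g q) = q := hgig q (by omega)
        rw [this]
        exact hq1
      have hvz : g q < gi 0 := Efact q hq1 hq2
      have hdesc := descA u (g q) (by omega) (by omega)
      omega
    have SimgEq : (Finset.Ioc (gi 0) (g 0)).image g = Finset.Icc 1 (g 0 - gi 0) := by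
      apply Finset.eq_of_subset_of_card_le
      · intro v hv
        simp only [Finset.mem_image, Finset.mem_Ioc] at hv
        obtain ⟨q, ⟨hq1, hq2⟩, hqv⟩ := hv
        simp only [Finset.mem_Icc]
        have h2 : g q ≠ 0 := by
          intro h
          have : q = gi 0 := by rw [← hgig q (by omega), h]
          omega
        have := SleB q hq1 hq2
        omega
      · rw [hScard, Nat.card_Icc]
        omega
    -- lower bound for value at z-1
    have glow : g 0 - gi 0 + 1 ≤ g (gi 0 - 1) := by
      by_contra hcon
      push_neg at hcon
      have h0 : g (gi 0 - 1) ≠ 0 := by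
        intro h
        have : gi 0 - 1 = gi 0 := by rw [← hgig (gi 0 - 1) (by omega), h]
        omega
      have hmem : g (gi 0 - 1) ∈ Finset.Icc 1 (g 0 - gi 0) := by
        simp only [Finset.mem_Icc]; omega
      rw [← SimgEq] at hmem
      simp only [Finset.mem_image, Finset.mem_Ioc] at hmem
      obtain ⟨q, ⟨hq1, hq2⟩, hqv⟩ := hmem
      have : q = gi 0 - 1 := hinj q (gi 0 - 1) (by omega) (by omega) hqv
      omega
    -- P1
    have chainU : ∀ i, i ≤ gi 0 → g i + i ≤ g 0 := by
      intro i
      induction i with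
      | zero => intro _; omega
      | succ i iht =>
        intro h
        have h1 := iht (by omega)
        have h2 := descA i (i+1) (by omega) (by omega)
        omega
    have chainL : ∀ t, t ≤ gi 0 - 1 → g 0 - gi 0 + 1 + t ≤ g (gi 0 - 1 - t) := by
      intro t
      induction t with
      | zero => intro _; simpa using glow
      | succ t iht =>
        intro h
        have h1 := iht (by omega)
        have h2 := descA (gi 0 - 1 - (t+1)) (gi 0 - 1 - t) (by omega) (by omega)
        omega
    have P1 : ∀ i, i < gi 0 → g i = g 0 - i := by
      intro i hi
      have h1 := chainU i (by omega)
      have h2 := chainL (gi 0 - 1 - i) (by omega)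
      have he : gi 0 - 1 - (gi 0 - 1 - i) = i := by omega
      rw [he] at h2
      omega
    -- ascending on (z, c]
    have asc : ∀ q1 q2, gi 0 < q1 → q1 < q2 → q2 ≤ g 0 → g q1 < g q2 := by
      intro q1 q2 hq1 hq12 hq2c
      have hq1n : q1 < n := by omega
      have hq2n : q2 < n := by omega
      have e1 : g (g 0 - q2) = q2 := by
        have := P1 (g 0 - q2) (by omega)
        rw [this]
        omega
      have e2 : g (g 0 - q1) = q1 := by
        have := P1 (g 0 - q1) (by omega)
        rw [this]
        omega
      have e3 : g (g 0 - gi 0) = gi 0 := by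
        have := P1 (g 0 - gi 0) hb'z
        rw [this]
        omega
      have h3 := H3 (g 0 - q2) (g 0 - q1) (g 0 - gi 0) (by omega) (by omega) (by omega)
      rw [e1, e2, e3, hgz] at h3
      have hgq2 : 0 < g q2 := by
        rcases Nat.eq_zero_or_pos (g q2) with h | h
        · exfalso
          have : q2 = gi 0 := by rw [← hgig q2 hq2n, h]
          omega
        · exact h
      have hge : ¬ (g q2 < g q1) := fun hlt => h3 ⟨by omega, hlt⟩
      have hne : g q1 ≠ g q2 := by
        intro h
        have := hinj q1 q2 hq1n hq2n h
        omega
      omega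
    have ascL : ∀ t, 1 ≤ t → t ≤ g 0 - gi 0 → t ≤ g (gi 0 + t) := by
      intro t
      induction t with
      | zero => intro h; omega
      | succ t iht =>
        intro _ ht
        rcases Nat.eq_zero_or_pos t with h0 | h0
        · subst h0
          have h2 : g (gi 0 + 1) ≠ 0 := by
            intro h
            have : gi 0 + 1 = gi 0 := by rw [← hgig (gi 0 + 1) (by omega), h]
            omega
          simpa using Nat.one_le_iff_ne_zero.2 h2
        · have h1 := iht (by omega) (by omega)
          have h2 := asc (gi 0 + t) (gi 0 + t + 1) (by omega) (by omega) (by omega)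
          have he : gi 0 + (t + 1) = gi 0 + t + 1 := by omega
          rw [he]
          omega
    have ascU : ∀ s, gi 0 < g 0 → s ≤ g 0 - gi 0 - 1 → g (g 0 - s) ≤ g 0 - gi 0 - s := by
      intro s hzc'
      induction s with
      | zero =>
        intro h
        have := SleB (g 0) (by omega) (le_refl _)
        simpa using this
      | succ s iht =>
        intro h
        have h1 := iht (by omega)
        have h2 := asc (g 0 - (s+1)) (g 0 - s) (by omega) (by omega) (by omega)
        omega
    have P2 : ∀ t, 1 ≤ t → t ≤ g 0 - gi 0 → g (gi 0 + t) = t := by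
      intro t h1t ht
      have h1 := ascL t h1t ht
      have h2 := ascU (g 0 - gi 0 - t) (by omega) (by omega)
      have he : g 0 - (g 0 - gi 0 - t) = gi 0 + t := by omega
      rw [he] at h2
      omega
    -- assemble
    refine ⟨gi 0, g 0 + 1 - gi 0, by omega, by omega, ?_, ?_, ?_⟩
    · intro i hi
      have := P1 i hi
      omega
    · intro i h1 h2
      rcases Nat.eq_or_lt_of_le h1 with he | hlt
      · rw [← he, hgz]
        omega
      · have := P2 (i - gi 0) (by omega) (by omega)
        have he : gi 0 + (i - gi 0) = i := by omega
        rw [he] at this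
        omega
    · intro k hk hkn
      have hcl : ∀ k', k' < n → (g 0 < k' ↔ g 0 < g k') := by
        intro k' hk'n
        constructor
        · intro h
          exact B1 k' h hk'n
        · intro h
          by_contra hc
          push_neg at hc
          have := B2 k' hc
          omega
      have ND3 : ∀ j k l, g 0 < j → j < k → k < l → l < n → ¬(g l < g k ∧ g k < g j) := by
        intro j k' l hj hjk hkl hln ⟨ha, hb⟩
        have hlz : l ≠ gi 0 := by omega
        have hgl : 0 < g l := by
          rcases Nat.eq_zero_or_pos (g l) with h | h
          · exfalso
            have : l = gi 0 := by rw [← hgig l (by omega), h]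
            omega
          · exact h
        exact H2 (gi 0) j k' l (by omega) hjk hkl hln ⟨by omega, ha, hb⟩
      exact tail_core hg hgi hgig hggi H1 ND3 H3 n (g 0) (by omega) (le_refl _) hcl k
        (by omega) hkn

end CompleteCore

lemma contains231_iff {n : ℕ} (π : Equiv.Perm (Fin n)) :
    ContainsPat π p231 ↔
      ∃ i j k : Fin n, i < j ∧ j < k ∧ π k < π i ∧ π i < π j := by
  constructor
  · rintro ⟨f, hm, hiff⟩
    exact ⟨f 0, f 1, f 2, hm (by decide), hm (by decide),
      (hiff 2 0).1 (by decide), (hiff 0 1).1 (by decide)⟩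
  · rintro ⟨i, j, k, hij, hjk, h1, h2⟩
    have v1 : (π k).val < (π i).val := h1
    have v2 : (π i).val < (π j).val := h2
    have wij : i.val < j.val := hij
    have wjk : j.val < k.val := hjk
    refine ⟨fun a => if a.val = 0 then i else if a.val = 1 then j else k, ?_, ?_⟩
    · intro a b hab
      simp only [Fin.lt_def] at hab ⊢
      split_ifs <;> omega
    · intro a b
      have hσ : ∀ t : Fin 3, (p231 t).val =
          if t.val = 0 then 1 else if t.val = 1 then 2 else 0 := by decide
      rw [Fin.lt_def, Fin.lt_def, hσ a, hσ b]
      simp only []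
      split_ifs <;> omega

lemma contains1432_iff {n : ℕ} (π : Equiv.Perm (Fin n)) :
    ContainsPat π p1432 ↔
      ∃ i j k l : Fin n, i < j ∧ j < k ∧ k < l ∧ π i < π l ∧ π l < π k ∧ π k < π j := by
  constructor
  · rintro ⟨f, hm, hiff⟩
    exact ⟨f 0, f 1, f 2, f 3, hm (by decide), hm (by decide), hm (by decide),
      (hiff 0 3).1 (by decide), (hiff 3 2).1 (by decide), (hiff 2 1).1 (by decide)⟩
  · rintro ⟨i, j, k, l, hij, hjk, hkl, h1, h2, h3⟩
    have v1 : (π i).val < (π l).val := h1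
    have v2 : (π l).val < (π k).val := h2
    have v3 : (π k).val < (π j).val := h3
    have wij : i.val < j.val := hij
    have wjk : j.val < k.val := hjk
    have wkl : k.val < l.val := hkl
    refine ⟨fun a => if a.val = 0 then i else if a.val = 1 then j else
      if a.val = 2 then k else l, ?_, ?_⟩
    · intro a b hab
      simp only [Fin.lt_def] at hab ⊢
      split_ifs <;> omega
    · intro a b
      have hσ : ∀ t : Fin 4, (p1432 t).val =
          if t.val = 0 then 0 else if t.val = 1 then 3 else if t.val = 2 then 2 else 1 := by
        decide
      rw [Fin.lt_def, Fin.lt_def, hσ a, hσ b]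
      simp only []
      split_ifs <;> omega

/-- The structural characterization predicate. -/
def Pprop {n : ℕ} (π : Equiv.Perm (Fin n)) : Prop :=
  ∃ a b : ℕ, b ≤ a ∧ a + b ≤ n ∧
    (∀ i : Fin n, i.val < a → (π i).val = a + b - 1 - i.val) ∧
    (∀ i : Fin n, a ≤ i.val → i.val < a + b → (π i).val = i.val - a) ∧
    (∀ i : Fin n, a + b ≤ i.val →
      ((π i).val ≤ i.val + 1 ∧ i.val ≤ (π i).val + 1 ∧ π (π i) = i))

theorem good_iff_Pprop {n : ℕ} (hn : 1 ≤ n) (π : Equiv.Perm (Fin n)) :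
    (AvoidsPat π p231 ∧ AvoidsPat π p1432 ∧ AvoidsPat (π ^ 2) p231) ↔ Pprop π := by
  have hsq : ∀ x : Fin n, (π ^ 2) x = π (π x) := by
    intro x
    rw [sq, Equiv.Perm.mul_apply]
  constructor
  · rintro ⟨hA, hB, hC⟩
    set g : ℕ → ℕ := fun x => if h : x < n then (π ⟨x, h⟩).val else 0 with hgdef
    set gi : ℕ → ℕ := fun x => if h : x < n then (π.symm ⟨x, h⟩).val else 0 with hgidef
    have hgval : ∀ x (h : x < n), g x = (π ⟨x, h⟩).val := fun x h => dif_pos h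
    have hgival : ∀ x (h : x < n), gi x = (π.symm ⟨x, h⟩).val := fun x h => dif_pos h
    have hg : ∀ x, x < n → g x < n := by
      intro x h
      rw [hgval x h]
      exact (π ⟨x, h⟩).isLt
    have hgi : ∀ x, x < n → gi x < n := by
      intro x h
      rw [hgival x h]
      exact (π.symm ⟨x, h⟩).isLt
    have hgg : ∀ (x : Fin n), g x.val = (π x).val := by
      intro x
      rw [hgval x.val x.isLt]
    have hgig : ∀ x, x < n → gi (g x) = x := by
      intro x h
      rw [hgval x h, hgival _ (π ⟨x, h⟩).isLt]
      simp
    have hggi : ∀ x, x < n → g (gi x) = x := by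
      intro x h
      rw [hgival x h, hgval _ (π.symm ⟨x, h⟩).isLt]
      simp
    have hsqval : ∀ x (h : x < n), g (g x) = ((π ^ 2) ⟨x, h⟩).val := by
      intro x h
      rw [hsq ⟨x, h⟩, hgval x h, hgval _ (π ⟨x, h⟩).isLt]
    have H1 : ∀ i j k, i < j → j < k → k < n → ¬(g k < g i ∧ g i < g j) := by
      intro i j k hij hjk hkn ⟨h1, h2⟩
      apply hA
      rw [contains231_iff]
      refine ⟨⟨i, by omega⟩, ⟨j, by omega⟩, ⟨k, hkn⟩, hij, hjk, ?_, ?_⟩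
      · show ((π ⟨k, hkn⟩) : Fin n).val < ((π ⟨i, by omega⟩) : Fin n).val
        rw [← hgval k hkn, ← hgval i (by omega)]
        exact h1
      · show ((π ⟨i, by omega⟩) : Fin n).val < ((π ⟨j, by omega⟩) : Fin n).val
        rw [← hgval i (by omega), ← hgval j (by omega)]
        exact h2
    have H2 : ∀ i j k l, i < j → j < k → k < l → l < n →
        ¬(g i < g l ∧ g l < g k ∧ g k < g j) := by
      intro i j k l hij hjk hkl hln ⟨h1, h2, h3⟩
      apply hB
      rw [contains1432_iff]
      refine ⟨⟨i, by omega⟩, ⟨j, by omega⟩, ⟨k, by omega⟩, ⟨l, hln⟩, hij, hjk, hkl, ?_, ?_, ?_⟩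
      · show ((π ⟨i, by omega⟩) : Fin n).val < ((π ⟨l, hln⟩) : Fin n).val
        rw [← hgval i (by omega), ← hgval l hln]; exact h1
      · show ((π ⟨l, hln⟩) : Fin n).val < ((π ⟨k, by omega⟩) : Fin n).val
        rw [← hgval l hln, ← hgval k (by omega)]; exact h2
      · show ((π ⟨k, by omega⟩) : Fin n).val < ((π ⟨j, by omega⟩) : Fin n).val
        rw [← hgval k (by omega), ← hgval j (by omega)]; exact h3
    have H3 : ∀ i j k, i < j → j < k → k < n →
        ¬(g (g k) < g (g i) ∧ g (g i) < g (g j)) := by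
      intro i j k hij hjk hkn ⟨h1, h2⟩
      apply hC
      rw [contains231_iff]
      refine ⟨⟨i, by omega⟩, ⟨j, by omega⟩, ⟨k, hkn⟩, hij, hjk, ?_, ?_⟩
      · show (((π ^ 2) ⟨k, hkn⟩) : Fin n).val < (((π ^ 2) ⟨i, by omega⟩) : Fin n).val
        rw [← hsqval k hkn, ← hsqval i (by omega)]; exact h1
      · show (((π ^ 2) ⟨i, by omega⟩) : Fin n).val < (((π ^ 2) ⟨j, by omega⟩) : Fin n).val
        rw [← hsqval i (by omega), ← hsqval j (by omega)]; exact h2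
    obtain ⟨a, b, hba, hab, h1, h2, h3⟩ :=
      complete_core hn hg hgi hgig hggi H1 H2 H3
    refine ⟨a, b, hba, hab, ?_, ?_, ?_⟩
    · intro i hi
      rw [← hgg i]
      exact h1 i.val hi
    · intro i hi hi'
      rw [← hgg i]
      exact h2 i.val hi hi'
    · intro i hi
      obtain ⟨c1, c2, c3⟩ := h3 i.val hi i.isLt
      rw [← hgg i]
      refine ⟨c1, c2, ?_⟩
      have : g (g i.val) = i.val := c3
      have h4 : (π (π i)).val = i.val := by
        rw [← this, hgg i]
        rw [hgval _ (π i).isLt]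
      exact Fin.ext h4
  · rintro ⟨a, b, hba, hab, h1, h2, h3⟩
    set g : ℕ → ℕ := fun x => if h : x < n then (π ⟨x, h⟩).val else 0 with hgdef
    have hgval : ∀ x (h : x < n), g x = (π ⟨x, h⟩).val := fun x h => dif_pos h
    have k1 : ∀ i, i < a → g i = a + b - 1 - i := by
      intro i hi
      rw [hgval i (by omega)]
      exact h1 ⟨i, by omega⟩ hi
    have k2 : ∀ i, a ≤ i → i < a + b → g i = i - a := by
      intro i hi hi'
      rw [hgval i (by omega)]
      exact h2 ⟨i, by omega⟩ hi hi'
    have k3 : ∀ k, a + b ≤ k → k < n → (g k ≤ k + 1 ∧ k ≤ g k + 1 ∧ g (g k) = k) := by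
      intro k hk hkn
      obtain ⟨c1, c2, c3⟩ := h3 ⟨k, hkn⟩ hk
      rw [hgval k hkn]
      refine ⟨c1, c2, ?_⟩
      rw [hgval _ (π ⟨k, hkn⟩).isLt]
      have : (⟨(π ⟨k, hkn⟩).val, (π ⟨k, hkn⟩).isLt⟩ : Fin n) = π ⟨k, hkn⟩ := Fin.ext rfl
      rw [this]
      exact congrArg Fin.val c3
    have k3' : ∀ k, a + b ≤ k → k < n → (g k ≤ k + 1 ∧ k ≤ g k + 1) :=
      fun k hk hkn => ⟨(k3 k hk hkn).1, (k3 k hk hkn).2.1⟩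
    refine ⟨?_, ?_, ?_⟩
    · intro hcont
      rw [contains231_iff] at hcont
      obtain ⟨i, j, k, hij, hjk, hv1, hv2⟩ := hcont
      refine sound_231 k1 k2 k3' i.val j.val k.val hij hjk k.isLt ⟨?_, ?_⟩
      · rw [hgval i.val i.isLt, hgval k.val k.isLt]
        simpa [Fin.eta] using hv1
      · rw [hgval i.val i.isLt, hgval j.val j.isLt]
        simpa [Fin.eta] using hv2
    · intro hcont
      rw [contains1432_iff] at hcont
      obtain ⟨i, j, k, l, hij, hjk, hkl, hv1, hv2, hv3⟩ := hcont
      refine sound_1432 k1 k2 k3' i.val j.val k.val l.val hij hjk hkl l.isLt ⟨?_, ?_, ?_⟩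
      · rw [hgval i.val i.isLt, hgval l.val l.isLt]
        simpa [Fin.eta] using hv1
      · rw [hgval l.val l.isLt, hgval k.val k.isLt]
        simpa [Fin.eta] using hv2
      · rw [hgval k.val k.isLt, hgval j.val j.isLt]
        simpa [Fin.eta] using hv3
    · intro hcont
      rw [contains231_iff] at hcont
      obtain ⟨i, j, k, hij, hjk, hv1, hv2⟩ := hcont
      have hsqval : ∀ (x : Fin n), g (g x.val) = ((π ^ 2) x).val := by
        intro x
        rw [hsq x, hgval x.val x.isLt, hgval _ (π x).isLt]
      refine sound_sq231 hba hab k1 k2 k3 i.val j.val k.val hij hjk k.isLt ⟨?_, ?_⟩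
      · rw [hsqval i, hsqval k]
        exact hv1
      · rw [hsqval i, hsqval j]
        exact hv2


section PermMachinery
variable {n m : ℕ}

lemma symm_low (π : Equiv.Perm (Fin n)) (m : ℕ)
    (H : ∀ i : Fin n, i.val < m → (π i).val < m) :
    ∀ v : Fin n, v.val < m → (π.symm v).val < m := by
  intro v hv
  classical
  set s : Finset (Fin n) := Finset.univ.filter (fun i => i.val < m) with hs
  have himg : s.image π = s := by
    apply Finset.eq_of_subset_of_card_le
    · intro x hx
      simp only [hs, Finset.mem_image, Finset.mem_filter, Finset.mem_univ, true_and] at hx ⊢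
      obtain ⟨i, hi, hix⟩ := hx
      rw [← hix]
      exact H i hi
    · rw [Finset.card_image_of_injective _ π.injective]
  have hvs : v ∈ s := by simp [hs, hv]
  rw [← himg] at hvs
  simp only [Finset.mem_image] at hvs
  obtain ⟨i, hi, hiv⟩ := hvs
  have : π.symm v = i := by rw [← hiv]; simp
  rw [this]
  simp only [hs, Finset.mem_filter] at hi
  exact hi.2

/-- restriction of a permutation preserving an initial segment -/
def permRestrict (π : Equiv.Perm (Fin n)) (m : ℕ) (hmn : m ≤ n)
    (H : ∀ i : Fin n, i.val < m → (π i).val < m) : Equiv.Perm (Fin m) where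
  toFun i := ⟨(π ⟨i.val, by omega⟩).val, H _ i.isLt⟩
  invFun v := ⟨(π.symm ⟨v.val, by omega⟩).val, symm_low π m H _ v.isLt⟩
  left_inv i := by
    apply Fin.ext
    simp
  right_inv v := by
    apply Fin.ext
    simp

lemma permRestrict_val (π : Equiv.Perm (Fin n)) (m : ℕ) (hmn : m ≤ n)
    (H : ∀ i : Fin n, i.val < m → (π i).val < m) (i : Fin m) :
    ((permRestrict π m hmn H) i).val = (π ⟨i.val, by omega⟩).val := rfl

/-- extension of a permutation by fixed points at the end -/
def permExtend (hmn : m ≤ n) (π : Equiv.Perm (Fin m)) : Equiv.Perm (Fin n) where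
  toFun x := if h : x.val < m then ⟨(π ⟨x.val, h⟩).val, by
    have := (π ⟨x.val, h⟩).isLt; omega⟩ else x
  invFun x := if h : x.val < m then ⟨(π.symm ⟨x.val, h⟩).val, by
    have := (π.symm ⟨x.val, h⟩).isLt; omega⟩ else x
  left_inv x := by
    dsimp only
    by_cases h : x.val < m
    · rw [dif_pos h]
      have h2 : ((π ⟨x.val, h⟩) : Fin m).val < m := (π ⟨x.val, h⟩).isLt
      rw [dif_pos h2]
      apply Fin.ext
      simp
    · rw [dif_neg h, dif_neg h]
  right_inv x := by
    dsimp only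
    by_cases h : x.val < m
    · rw [dif_pos h]
      have h2 : ((π.symm ⟨x.val, h⟩) : Fin m).val < m := (π.symm ⟨x.val, h⟩).isLt
      rw [dif_pos h2]
      apply Fin.ext
      simp
    · rw [dif_neg h, dif_neg h]

lemma permExtend_val_low (hmn : m ≤ n) (π : Equiv.Perm (Fin m)) (x : Fin n)
    (h : x.val < m) : ((permExtend hmn π) x).val = (π ⟨x.val, h⟩).val := by
  show (dite _ _ _ : Fin n).val = _
  rw [dif_pos h]

lemma permExtend_val_high (hmn : m ≤ n) (π : Equiv.Perm (Fin m)) (x : Fin n)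
    (h : ¬ x.val < m) : (permExtend hmn π) x = x := by
  show (dite _ _ _ : Fin n) = x
  rw [dif_neg h]

/-- the full head permutation B_{n-b, b} -/
def headFull (n b : ℕ) (hb1 : 1 ≤ b) (hb2 : b + b ≤ n) : Equiv.Perm (Fin n) where
  toFun i := if i.val < n - b then ⟨n - 1 - i.val, by have := i.isLt; omega⟩
    else ⟨i.val - (n - b), by have := i.isLt; omega⟩
  invFun v := if h : v.val < b then ⟨v.val + (n - b), by have := v.isLt; omega⟩
    else ⟨n - 1 - v.val, by have := v.isLt; omega⟩
  left_inv i := by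
    dsimp only
    have hi := i.isLt
    by_cases h : i.val < n - b
    · rw [if_pos h]
      have h2 : ¬ (n - 1 - i.val < b) := by omega
      rw [dif_neg h2]
      apply Fin.ext
      show n - 1 - (n - 1 - i.val) = i.val
      omega
    · rw [if_neg h]
      have h2 : i.val - (n - b) < b := by omega
      rw [dif_pos h2]
      apply Fin.ext
      show i.val - (n - b) + (n - b) = i.val
      omega
  right_inv v := by
    dsimp only
    have hv := v.isLt
    by_cases h : v.val < b
    · rw [dif_pos h]
      have h2 : ¬ (v.val + (n - b) < n - b) := by omega
      rw [if_neg h2]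
      apply Fin.ext
      show v.val + (n - b) - (n - b) = v.val
      omega
    · rw [dif_neg h]
      have h2 : n - 1 - v.val < n - b := by omega
      rw [if_pos h2]
      apply Fin.ext
      show n - 1 - (n - 1 - v.val) = v.val
      omega

lemma headFull_val (n b : ℕ) (hb1 : 1 ≤ b) (hb2 : b + b ≤ n) (i : Fin n) :
    ((headFull n b hb1 hb2) i).val =
      if i.val < n - b then n - 1 - i.val else i.val - (n - b) := by
  show (ite _ _ _ : Fin n).val = _
  by_cases h : i.val < n - b
  · rw [if_pos h, if_pos h]
  · rw [if_neg h, if_neg h]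

def swapExtend (π : Equiv.Perm (Fin n)) : Equiv.Perm (Fin (n + 2)) :=
  (Equiv.swap ⟨n, by omega⟩ ⟨n+1, by omega⟩) * (permExtend (by omega) π)

lemma swapExtend_val_low (π : Equiv.Perm (Fin n)) (x : Fin (n+2)) (h : x.val < n) :
    ((swapExtend π) x).val = (π ⟨x.val, h⟩).val := by
  rw [swapExtend, Equiv.Perm.mul_apply]
  have h1 : (permExtend (by omega : n ≤ n + 2) π) x =
      ⟨(π ⟨x.val, h⟩).val, by have := (π ⟨x.val, h⟩).isLt; omega⟩ := by
    apply Fin.ext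
    rw [permExtend_val_low _ _ _ h]
  rw [h1, Equiv.swap_apply_of_ne_of_ne]
  · intro hc
    have := congrArg Fin.val hc
    simp only at this
    have := (π ⟨x.val, h⟩).isLt
    omega
  · intro hc
    have := congrArg Fin.val hc
    simp only at this
    have := (π ⟨x.val, h⟩).isLt
    omega

lemma swapExtend_val_n (π : Equiv.Perm (Fin n)) :
    (swapExtend π) ⟨n, by omega⟩ = ⟨n+1, by omega⟩ := by
  rw [swapExtend, Equiv.Perm.mul_apply, permExtend_val_high _ _ _ (by simp),
    Equiv.swap_apply_left]

lemma swapExtend_val_n1 (π : Equiv.Perm (Fin n)) :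
    (swapExtend π) ⟨n+1, by omega⟩ = ⟨n, by omega⟩ := by
  rw [swapExtend, Equiv.Perm.mul_apply, permExtend_val_high _ _ _ (by simp),
    Equiv.swap_apply_right]


end PermMachinery

section Transfer
variable {n : ℕ}

lemma pp_extend1 (π : Equiv.Perm (Fin (n+1))) (h : Pprop π) :
    Pprop (permExtend (by omega : n + 1 ≤ n + 2) π) := by
  obtain ⟨a, b, hba, hab, h1, h2, h3⟩ := h
  refine ⟨a, b, hba, by omega, ?_, ?_, ?_⟩
  · intro i hi
    have hi' : i.val < n + 1 := by omega
    rw [permExtend_val_low _ _ _ hi']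
    exact h1 ⟨i.val, hi'⟩ hi
  · intro i hi hi'
    have hi'' : i.val < n + 1 := by omega
    rw [permExtend_val_low _ _ _ hi'']
    exact h2 ⟨i.val, hi''⟩ hi hi'
  · intro i hi
    by_cases hlow : i.val < n + 1
    · rw [permExtend_val_low _ _ _ hlow]
      obtain ⟨c1, c2, c3⟩ := h3 ⟨i.val, hlow⟩ hi
      refine ⟨c1, c2, ?_⟩
      have hπlow : ((π ⟨i.val, hlow⟩) : Fin (n+1)).val < n + 1 := (π ⟨i.val, hlow⟩).isLt
      have e1 : (permExtend (by omega : n + 1 ≤ n + 2) π) i =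
          ⟨(π ⟨i.val, hlow⟩).val, by omega⟩ := by
        apply Fin.ext
        rw [permExtend_val_low _ _ _ hlow]
      rw [e1]
      apply Fin.ext
      rw [permExtend_val_low (by omega : n + 1 ≤ n + 2) π
        ⟨(π ⟨i.val, hlow⟩).val, by omega⟩ hπlow]
      calc ((π ⟨(π ⟨i.val, hlow⟩).val, hπlow⟩) : Fin (n+1)).val
          = ((π (π ⟨i.val, hlow⟩)) : Fin (n+1)).val := rfl
        _ = i.val := by rw [c3]
    · have he : (permExtend (by omega : n + 1 ≤ n + 2) π) i = i :=
        permExtend_val_high _ _ _ hlow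
      rw [he, he]
      exact ⟨by omega, by omega, rfl⟩

lemma pp_swapExtend (π : Equiv.Perm (Fin n)) (h : Pprop π) :
    Pprop (swapExtend π) := by
  obtain ⟨a, b, hba, hab, h1, h2, h3⟩ := h
  refine ⟨a, b, hba, by omega, ?_, ?_, ?_⟩
  · intro i hi
    have hi' : i.val < n := by omega
    rw [swapExtend_val_low _ _ hi']
    exact h1 ⟨i.val, hi'⟩ hi
  · intro i hi hi'
    have hi'' : i.val < n := by omega
    rw [swapExtend_val_low _ _ hi'']
    exact h2 ⟨i.val, hi''⟩ hi hi'
  · intro i hi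
    by_cases hlow : i.val < n
    · rw [swapExtend_val_low _ _ hlow]
      obtain ⟨c1, c2, c3⟩ := h3 ⟨i.val, hlow⟩ hi
      refine ⟨c1, c2, ?_⟩
      have hπlow : ((π ⟨i.val, hlow⟩) : Fin n).val < n := (π ⟨i.val, hlow⟩).isLt
      have e1 : (swapExtend π) i = ⟨(π ⟨i.val, hlow⟩).val, by omega⟩ := by
        apply Fin.ext
        rw [swapExtend_val_low _ _ hlow]
      rw [e1]
      apply Fin.ext
      rw [swapExtend_val_low _ _ hπlow]
      calc ((π ⟨(π ⟨i.val, hlow⟩).val, hπlow⟩) : Fin n).val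
          = ((π (π ⟨i.val, hlow⟩)) : Fin n).val := rfl
        _ = i.val := by rw [c3]
    · rcases Nat.lt_or_ge i.val (n+1) with hn1 | hn1
      · have he : i = ⟨n, by omega⟩ := Fin.ext (show i.val = n by omega)
        rw [he, swapExtend_val_n, swapExtend_val_n1]
        refine ⟨?_, ?_, rfl⟩ <;> show _ ≤ _ <;> simp <;> omega
      · have he : i = ⟨n+1, by omega⟩ :=
          Fin.ext (show i.val = n + 1 by have := i.isLt; omega)
        rw [he, swapExtend_val_n1, swapExtend_val_n]
        refine ⟨?_, ?_, rfl⟩ <;> show _ ≤ _ <;> simp <;> omega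

lemma pp_headFull (b : ℕ) (hb1 : 1 ≤ b) (hb2 : b + b ≤ n + 2) :
    Pprop (headFull (n+2) b hb1 hb2) := by
  refine ⟨n + 2 - b, b, by omega, by omega, ?_, ?_, ?_⟩
  · intro i hi
    rw [headFull_val]
    rw [if_pos hi]
    omega
  · intro i hi hi'
    rw [headFull_val]
    rw [if_neg (by omega)]
  · intro i hi
    exact absurd hi (by have := i.isLt; omega)

end Transfer


section Counting
variable {n : ℕ}

lemma permExtend_inj {m : ℕ} (hmn : m ≤ n) (π₁ π₂ : Equiv.Perm (Fin m))
    (h : permExtend hmn π₁ = permExtend hmn π₂) : π₁ = π₂ := by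
  apply Equiv.ext
  intro x
  apply Fin.ext
  have hx : (x.val : ℕ) < m := x.isLt
  have h1 := congrArg (fun e : Equiv.Perm (Fin n) => (e ⟨x.val, by omega⟩).val) h
  rw [permExtend_val_low hmn π₁ ⟨x.val, by omega⟩ hx,
    permExtend_val_low hmn π₂ ⟨x.val, by omega⟩ hx] at h1
  exact h1

lemma swapExtend_inj (π₁ π₂ : Equiv.Perm (Fin n))
    (h : swapExtend π₁ = swapExtend π₂) : π₁ = π₂ := by
  apply Equiv.ext
  intro x
  apply Fin.ext
  have hx : (x.val : ℕ) < n := x.isLt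
  have h1 := congrArg (fun e : Equiv.Perm (Fin (n+2)) => (e ⟨x.val, by omega⟩).val) h
  rw [swapExtend_val_low π₁ ⟨x.val, by omega⟩ hx,
    swapExtend_val_low π₂ ⟨x.val, by omega⟩ hx] at h1
  exact h1

set_option maxHeartbeats 1000000 in
theorem card_rec (hn : 1 ≤ n) :
    Nat.card {π : Equiv.Perm (Fin (n+2)) // Pprop π} =
      Nat.card {π : Equiv.Perm (Fin (n+1)) // Pprop π} +
      (Nat.card {π : Equiv.Perm (Fin n) // Pprop π} + (n+2)/2) := by
  classical
  have hb2 : ∀ q : Fin ((n+2)/2), (q.val + 1) + (q.val + 1) ≤ n + 2 := by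
    intro q
    have := q.isLt
    omega
  set F : ({π : Equiv.Perm (Fin (n+1)) // Pprop π} ⊕
      ({π : Equiv.Perm (Fin n) // Pprop π} ⊕ Fin ((n+2)/2))) →
      {π : Equiv.Perm (Fin (n+2)) // Pprop π} := fun x =>
    match x with
    | Sum.inl ⟨π', h⟩ => ⟨permExtend (by omega) π', pp_extend1 π' h⟩
    | Sum.inr (Sum.inl ⟨π'', h⟩) => ⟨swapExtend π'', pp_swapExtend π'' h⟩
    | Sum.inr (Sum.inr q) => ⟨headFull (n+2) (q.val+1) (by omega) (hb2 q),
        pp_headFull (q.val+1) (by omega) (hb2 q)⟩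
    with hF
  -- value at the last position distinguishes the three classes
  have vA : ∀ (π' : Equiv.Perm (Fin (n+1))),
      ((permExtend (by omega : n+1 ≤ n+2) π') ⟨n+1, by omega⟩).val = n+1 := by
    intro π'
    rw [permExtend_val_high _ _ _ (by simp)]
  have vB : ∀ (π'' : Equiv.Perm (Fin n)),
      ((swapExtend π'') ⟨n+1, by omega⟩).val = n := by
    intro π''
    rw [swapExtend_val_n1]
  have vC : ∀ q : Fin ((n+2)/2),
      ((headFull (n+2) (q.val+1) (by omega) (hb2 q)) ⟨n+1, by omega⟩).val = q.val := by
    intro q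
    rw [headFull_val]
    have hq := q.isLt
    rw [if_neg (by show ¬ (n+1 < n + 2 - (q.val+1)); omega)]
    show n + 1 - (n + 2 - (q.val + 1)) = q.val
    omega
  have hqn : ∀ q : Fin ((n+2)/2), q.val < n := by
    intro q
    have := q.isLt
    omega
  have hinj : Function.Injective F := by
    rintro (⟨π₁, hp1⟩ | (⟨π₁, hp1⟩ | q₁)) (⟨π₂, hp2⟩ | (⟨π₂, hp2⟩ | q₂)) hxy <;>
      rw [hF] at hxy <;> simp only [Subtype.mk.injEq] at hxy
    · exact congrArg _ (Subtype.ext (permExtend_inj _ _ _ hxy))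
    · exfalso
      have := congrArg (fun e : Equiv.Perm (Fin (n+2)) => (e ⟨n+1, by omega⟩).val) hxy
      rw [vA, vB] at this
      omega
    · exfalso
      have := congrArg (fun e : Equiv.Perm (Fin (n+2)) => (e ⟨n+1, by omega⟩).val) hxy
      rw [vA, vC] at this
      have := hqn q₂
      omega
    · exfalso
      have := congrArg (fun e : Equiv.Perm (Fin (n+2)) => (e ⟨n+1, by omega⟩).val) hxy
      rw [vA, vB] at this
      omega
    · exact congrArg _ (congrArg _ (Subtype.ext (swapExtend_inj _ _ hxy)))
    · exfalso
      have := congrArg (fun e : Equiv.Perm (Fin (n+2)) => (e ⟨n+1, by omega⟩).val) hxy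
      rw [vB, vC] at this
      have := hqn q₂
      omega
    · exfalso
      have := congrArg (fun e : Equiv.Perm (Fin (n+2)) => (e ⟨n+1, by omega⟩).val) hxy
      rw [vA, vC] at this
      have := hqn q₁
      omega
    · exfalso
      have := congrArg (fun e : Equiv.Perm (Fin (n+2)) => (e ⟨n+1, by omega⟩).val) hxy
      rw [vB, vC] at this
      have := hqn q₁
      omega
    · have := congrArg (fun e : Equiv.Perm (Fin (n+2)) => (e ⟨n+1, by omega⟩).val) hxy
      rw [vC, vC] at this
      exact congrArg _ (congrArg _ (Fin.ext this))
  have hsurj : Function.Surjective F := by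
    rintro ⟨π, hP⟩
    obtain ⟨a, b, hba, hab, h1, h2, h3⟩ := hP
    by_cases hfull : a + b = n + 2
    · -- full head case
      have hbs2 : (max b 1 - 1 + 1) + (max b 1 - 1 + 1) ≤ n + 2 := by
        rcases Nat.eq_zero_or_pos b with h0 | h0 <;> omega
      have hq : max b 1 - 1 < (n+2)/2 := by
        rcases Nat.eq_zero_or_pos b with h0 | h0 <;> omega
      refine ⟨Sum.inr (Sum.inr ⟨max b 1 - 1, hq⟩), ?_⟩
      rw [hF]
      apply Subtype.ext
      show headFull (n+2) (max b 1 - 1 + 1) (by omega) (hb2 ⟨max b 1 - 1, hq⟩) = π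
      apply Equiv.ext
      intro x
      apply Fin.ext
      rw [headFull_val]
      have hx := x.isLt
      by_cases hxa : x.val < n + 2 - (max b 1 - 1 + 1)
      · rw [if_pos hxa]
        rcases Nat.eq_zero_or_pos b with h0 | h0
        · rw [h1 x (by omega)]
          omega
        · rw [h1 x (by omega)]
          omega
      · rw [if_neg hxa]
        rcases Nat.eq_zero_or_pos b with h0 | h0
        · rw [h1 x (by omega)]
          omega
        · rw [h2 x (by omega) (by omega)]
          omega
    · -- tail at the last position
      obtain ⟨c1, c2, c3⟩ := h3 ⟨n+1, by omega⟩ (by show a + b ≤ n+1; omega)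
      have hvlt : (π ⟨n+1, by omega⟩).val < n + 2 := (π ⟨n+1, by omega⟩).isLt
      by_cases hfix : (π ⟨n+1, by omega⟩).val = n+1
      · -- last point fixed
        have hfixe : π ⟨n+1, by omega⟩ = ⟨n+1, by omega⟩ := Fin.ext hfix
        have H : ∀ i : Fin (n+2), i.val < n+1 → (π i).val < n+1 := by
          intro i hi
          have hne : (π i).val ≠ n+1 := by
            intro he
            have h4 : π i = π ⟨n+1, by omega⟩ := Fin.ext (by rw [he, hfixe])
            have := π.injective h4
            rw [this] at hi
            simp at hi
          have := (π i).isLt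
          omega
        have hPr : Pprop (permRestrict π (n+1) (by omega) H) := by
          refine ⟨a, b, hba, by omega, ?_, ?_, ?_⟩
          · intro i hi
            rw [permRestrict_val]
            exact h1 ⟨i.val, by omega⟩ hi
          · intro i hi hi'
            rw [permRestrict_val]
            exact h2 ⟨i.val, by omega⟩ hi hi'
          · intro i hi
            obtain ⟨d1, d2, d3⟩ := h3 ⟨i.val, by omega⟩ hi
            rw [permRestrict_val]
            refine ⟨d1, d2, ?_⟩
            apply Fin.ext
            rw [permRestrict_val]
            show ((π ⟨((π ⟨i.val, _⟩) : Fin (n+2)).val, _⟩) : Fin (n+2)).val = i.val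
            calc ((π ⟨((π ⟨i.val, by omega⟩) : Fin (n+2)).val, by omega⟩) : Fin (n+2)).val
                = ((π (π ⟨i.val, by omega⟩)) : Fin (n+2)).val := rfl
              _ = i.val := by rw [d3]
        refine ⟨Sum.inl ⟨permRestrict π (n+1) (by omega) H, hPr⟩, ?_⟩
        rw [hF]
        apply Subtype.ext
        show permExtend (by omega) (permRestrict π (n+1) (by omega) H) = π
        apply Equiv.ext
        intro x
        apply Fin.ext
        by_cases hx : x.val < n + 1
        · rw [permExtend_val_low _ _ _ hx]
          rw [permRestrict_val]
        · have hxe : x = ⟨n+1, by omega⟩ := Fin.ext (by have := x.isLt; omega)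
          rw [permExtend_val_high _ _ _ hx, hxe, hfixe]
      · -- swap at the end
        have hc1 : (π ⟨n+1, by omega⟩).val ≤ n + 1 + 1 := c1
        have hc2 : n + 1 ≤ (π ⟨n+1, by omega⟩).val + 1 := c2
        have hvn : (π ⟨n+1, by omega⟩).val = n := by omega
        have hswp : π ⟨n, by omega⟩ = ⟨n+1, by omega⟩ := by
          have he : π ⟨n+1, by omega⟩ = ⟨n, by omega⟩ := Fin.ext hvn
          rw [← he]
          exact c3
        have habn : a + b ≤ n := by
          by_contra hc
          push_neg at hc
          have hab1 : a + b = n + 1 := by omega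
          rcases Nat.lt_or_ge n a with hna | hna
          · have := h1 ⟨n, by omega⟩ (by show n < a; omega)
            rw [hswp] at this
            show False
            have h5 : n + 1 = a + b - 1 - n := this
            omega
          · have := h2 ⟨n, by omega⟩ (by show a ≤ n; omega) (by show n < a + b; omega)
            rw [hswp] at this
            have h5 : n + 1 = n - a := this
            omega
        have H : ∀ i : Fin (n+2), i.val < n → (π i).val < n := by
          intro i hi
          have e1 : (π i).val ≠ n+1 := by
            intro he
            have h4 : π i = π ⟨n, by omega⟩ := Fin.ext (by rw [he, hswp])
            have := π.injective h4
            rw [this] at hi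
            simp at hi
          have e2 : (π i).val ≠ n := by
            intro he
            have h4 : π i = π ⟨n+1, by omega⟩ := Fin.ext (by
              rw [he, hvn])
            have := π.injective h4
            rw [this] at hi
            simp at hi
          have := (π i).isLt
          omega
        have hPr : Pprop (permRestrict π n (by omega) H) := by
          refine ⟨a, b, hba, habn, ?_, ?_, ?_⟩
          · intro i hi
            rw [permRestrict_val]
            exact h1 ⟨i.val, by omega⟩ hi
          · intro i hi hi'
            rw [permRestrict_val]
            exact h2 ⟨i.val, by omega⟩ hi hi'
          · intro i hi
            obtain ⟨d1, d2, d3⟩ := h3 ⟨i.val, by omega⟩ hi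
            rw [permRestrict_val]
            refine ⟨d1, d2, ?_⟩
            apply Fin.ext
            rw [permRestrict_val]
            calc ((π ⟨((π ⟨i.val, by omega⟩) : Fin (n+2)).val, by omega⟩) : Fin (n+2)).val
                = ((π (π ⟨i.val, by omega⟩)) : Fin (n+2)).val := rfl
              _ = i.val := by rw [d3]
        refine ⟨Sum.inr (Sum.inl ⟨permRestrict π n (by omega) H, hPr⟩), ?_⟩
        rw [hF]
        apply Subtype.ext
        show swapExtend (permRestrict π n (by omega) H) = π
        apply Equiv.ext
        intro x
        by_cases hx : x.val < n
        · apply Fin.ext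
          rw [swapExtend_val_low _ _ hx]
          rw [permRestrict_val]
        · rcases Nat.lt_or_ge x.val (n+1) with hx1 | hx1
          · have hxe : x = ⟨n, by omega⟩ := Fin.ext (show x.val = n by omega)
            rw [hxe, swapExtend_val_n, hswp]
          · have hxe : x = ⟨n+1, by omega⟩ :=
              Fin.ext (show x.val = n+1 by have := x.isLt; omega)
            rw [hxe, swapExtend_val_n1]
            exact (Fin.ext hvn).symm
  have hcard := Nat.card_eq_of_bijective F ⟨hinj, hsurj⟩
  rw [← hcard, Nat.card_sum, Nat.card_sum]
  congr 1
  congr 1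
  simp

end Counting


section Bases

lemma pp_all1 : ∀ π : Equiv.Perm (Fin 1), Pprop π := by
  intro π
  refine ⟨0, 0, le_refl 0, by omega, by omega, by omega, ?_⟩
  intro i _
  have h1 : (π i).val < 1 := (π i).isLt
  have h2 : i.val < 1 := i.isLt
  refine ⟨by omega, by omega, ?_⟩
  apply Fin.ext
  have := (π (π i)).isLt
  omega

lemma pp_all2 : ∀ π : Equiv.Perm (Fin 2), Pprop π := by
  intro π
  have hinv : ∀ (σ : Equiv.Perm (Fin 2)) (i : Fin 2), σ (σ i) = i := by decide
  refine ⟨0, 0, le_refl 0, by omega, by omega, by omega, ?_⟩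
  intro i _
  have h1 : (π i).val < 2 := (π i).isLt
  have h2 : i.val < 2 := i.isLt
  exact ⟨by omega, by omega, hinv π i⟩

lemma card1 : Nat.card {π : Equiv.Perm (Fin 1) // Pprop π} = 1 := by
  rw [Nat.card_congr (Equiv.subtypeUnivEquiv pp_all1)]
  simp [Nat.card_eq_fintype_card]

lemma card2 : Nat.card {π : Equiv.Perm (Fin 2) // Pprop π} = 2 := by
  rw [Nat.card_congr (Equiv.subtypeUnivEquiv pp_all2)]
  simp [Nat.card_eq_fintype_card, Fintype.card_perm]

lemma main_count : ∀ m : ℕ,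
    Nat.card {π : Equiv.Perm (Fin (m+1)) // Pprop π} + ((m+2)/2 + 1) = lucas (m+2) := by
  intro m
  induction m using Nat.strong_induction_on with
  | _ m ih =>
    match m with
    | 0 =>
      rw [card1]
      rfl
    | 1 =>
      rw [card2]
      rfl
    | (k+2) =>
      have h1 := ih (k+1) (by omega)
      have h2 := ih k (by omega)
      have h3 := card_rec (n := k+1) (by omega)
      have h3' : Nat.card {π : Equiv.Perm (Fin (k+2+1)) // Pprop π} =
          Nat.card {π : Equiv.Perm (Fin (k+1+1)) // Pprop π} +
          (Nat.card {π : Equiv.Perm (Fin (k+1)) // Pprop π} + (k+2+1)/2) := h3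
      have h4 : lucas (k+2+2) = lucas (k+1+2) + lucas (k+2) := rfl
      omega

end Bases


/-- For every n ≥ 1, the number of permutations π in S_n such that π avoids
231 and 1432 and π² avoids 231 equals L_{n+1} − ⌈n/2⌉ − 1 (⌈n/2⌉ = (n+1)/2 in ℕ). -/
theorem stmt0 (n : ℕ) (hn : 1 ≤ n) :
    Nat.card {π : Equiv.Perm (Fin n) //
        AvoidsPat π p231 ∧ AvoidsPat π p1432 ∧ AvoidsPat (π ^ 2) p231} =
      lucas (n + 1) - (n + 1) / 2 - 1 := by
  rw [Nat.card_congr (Equiv.subtypeEquivRight (fun π => good_iff_Pprop hn π))]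
  obtain ⟨m, rfl⟩ : ∃ m, n = m + 1 := ⟨n - 1, by omega⟩
  have h := main_count m
  have h2 : lucas (m + 1 + 1) = lucas (m + 2) := rfl
  omega
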